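/- Let g = h ⊕ ℝe₇ be a 7-dimensional Lie algebra with codimension-one unimodular ideal h, φ = ω∧e⁷ + ρ a G2-structure with e₇ ⊥ h of norm one, and f = ad(e₇)|_h. Then φ is exact if and only if there exist ν ∈ Λ²h* and α ∈ h* with ρ = d_h ν and f.ν − d_h α = ω, where d_h is the Chevalley–Eilenberg differential of h and f.ν denotes the natural action of the endomorphism f on 2-forms. -/

import Mathlib

/-!
A 3-form on `g = h ⊕ ℝe₇` is determined by its values on `h × h × h` and on `h × h × e₇`.
For an alternating 2-form `χ` on `g`, `(dχ)(X, Y, e₇) = (ad e₇ . χ)(X, Y) − χ([X, Y], e₇)`, so with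
`ν = χ|_h` and `α = −χ(·, e₇)|_h` the two components of `dχ = φ` read `ρ = d_h ν` and
`f.ν − d_h α = ω`. Conversely, any pair `(ν, α)` comes from such a `χ` (extend `ν` by
`χ(X, e₇) = −α X`), and then `dχ` and `φ` agree on both components.
-/

open Module

/-- Wedge product of `k` covectors, as an alternating `k`-form (determinant convention). -/
noncomputable def wedgeCov {V : Type*} [AddCommGroup V] [Module ℝ V] {k : ℕ}
    (f : Fin k → Module.Dual ℝ V) : V [⋀^Fin k]→ₗ[ℝ] ℝ :=
  Matrix.detRowAlternating.compLinearMap (LinearMap.pi f)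

/-- Wedge product of alternating forms (shuffle convention, compatible with `wedgeCov`). -/
noncomputable def aw {V : Type*} [AddCommGroup V] [Module ℝ V] {a b : ℕ}
    (ω : V [⋀^Fin a]→ₗ[ℝ] ℝ) (σ : V [⋀^Fin b]→ₗ[ℝ] ℝ) : V [⋀^Fin (a + b)]→ₗ[ℝ] ℝ :=
  ((TensorProduct.lid ℝ ℝ).toLinearMap.compAlternatingMap (ω.domCoprod σ)).domDomCongr
    finSumFinEquiv

/-- The `i`-th coordinate covector on `Fin n → ℝ`. -/
noncomputable def pr {n : ℕ} (i : Fin n) : Module.Dual ℝ (Fin n → ℝ) := LinearMap.proj i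

/-- The model `G₂` three-form `φ₀ = ω₀ ∧ e⁷ + ρ₀ = e¹²⁷ + e³⁴⁷ + e⁵⁶⁷ + e¹³⁵ − e¹⁴⁶ − e²³⁶ − e²⁴⁵`
on `ℝ⁷` (all indices 0-based). -/
noncomputable def phi0 : (Fin 7 → ℝ) [⋀^Fin 3]→ₗ[ℝ] ℝ :=
  wedgeCov ![pr 0, pr 1, pr 6] + wedgeCov ![pr 2, pr 3, pr 6] + wedgeCov ![pr 4, pr 5, pr 6] +
    wedgeCov ![pr 0, pr 2, pr 4] - wedgeCov ![pr 0, pr 3, pr 5] - wedgeCov ![pr 1, pr 2, pr 5] -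
    wedgeCov ![pr 1, pr 3, pr 4]

/-- A three-form on a real vector space is a `G₂`-structure if it is linearly
equivalent to the model form `φ₀`. -/
def IsG2 {V : Type*} [AddCommGroup V] [Module ℝ V] (φ : V [⋀^Fin 3]→ₗ[ℝ] ℝ) : Prop :=
  ∃ u : V ≃ₗ[ℝ] (Fin 7 → ℝ), φ = phi0.compLinearMap u.toLinearMap

/-- The restriction of `ad(X)` to an ideal `h`. -/
noncomputable def adRestrict {g : Type*} [LieRing g] [LieAlgebra ℝ g] (h : LieIdeal ℝ g)
    (X : g) : ↥h.toSubmodule →ₗ[ℝ] ↥h.toSubmodule :=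
  (LieAlgebra.ad ℝ g X).restrict (p := h.toSubmodule) (q := h.toSubmodule)
    (fun _ hy => h.lie_mem hy)

namespace Matrix

variable {α : Type*} (x y z w : α)

theorem update_vec3_zero : Function.update ![x, y, z] 0 w = ![w, y, z] := by
  ext i; fin_cases i <;> rfl

theorem update_vec3_one : Function.update ![x, y, z] 1 w = ![x, w, z] := by
  ext i; fin_cases i <;> rfl

theorem update_vec3_two : Function.update ![x, y, z] 2 w = ![x, y, w] := by
  ext i; fin_cases i <;> rfl

end Matrix

namespace AlternatingMap

variable {R V N : Type*} [CommRing R] [AddCommGroup V] [Module R V] [AddCommGroup N] [Module R N]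
  (ψ : V [⋀^Fin 3]→ₗ[R] N)

theorem map_vec3_add_left (x x' y z : V) : ψ ![x + x', y, z] = ψ ![x, y, z] + ψ ![x', y, z] := by
  simpa only [Matrix.update_vec3_zero] using ψ.map_update_add ![x, y, z] 0 x x'

theorem map_vec3_add_mid (x y y' z : V) : ψ ![x, y + y', z] = ψ ![x, y, z] + ψ ![x, y', z] := by
  simpa only [Matrix.update_vec3_one] using ψ.map_update_add ![x, y, z] 1 y y'

theorem map_vec3_add_right (x y z z' : V) : ψ ![x, y, z + z'] = ψ ![x, y, z] + ψ ![x, y, z'] := by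
  simpa only [Matrix.update_vec3_two] using ψ.map_update_add ![x, y, z] 2 z z'

theorem map_vec3_smul_left (s : R) (x y z : V) : ψ ![s • x, y, z] = s • ψ ![x, y, z] := by
  simpa only [Matrix.update_vec3_zero] using ψ.map_update_smul ![x, y, z] 0 s x

theorem map_vec3_smul_mid (s : R) (x y z : V) : ψ ![x, s • y, z] = s • ψ ![x, y, z] := by
  simpa only [Matrix.update_vec3_one] using ψ.map_update_smul ![x, y, z] 1 s y

theorem map_vec3_smul_right (s : R) (x y z : V) : ψ ![x, y, s • z] = s • ψ ![x, y, z] := by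
  simpa only [Matrix.update_vec3_two] using ψ.map_update_smul ![x, y, z] 2 s z

theorem map_vec3_self_left (x z : V) : ψ ![x, x, z] = 0 :=
  ψ.map_eq_zero_of_eq _ (i := 0) (j := 1) rfl (by decide)

theorem map_vec3_self_right (x y : V) : ψ ![x, y, y] = 0 :=
  ψ.map_eq_zero_of_eq _ (i := 1) (j := 2) rfl (by decide)

theorem map_vec3_self_outer (x y : V) : ψ ![x, y, x] = 0 :=
  ψ.map_eq_zero_of_eq _ (i := 0) (j := 2) rfl (by decide)

theorem map_vec3_swap_left (x y z : V) : ψ ![y, x, z] = -ψ ![x, y, z] := by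
  rw [← ψ.map_swap ![x, y, z] (i := 0) (j := 1) (by decide)]
  congr 1; ext i; fin_cases i <;> rfl

theorem map_vec3_swap_right (x y z : V) : ψ ![x, z, y] = -ψ ![x, y, z] := by
  rw [← ψ.map_swap ![x, y, z] (i := 1) (j := 2) (by decide)]
  congr 1; ext i; fin_cases i <;> rfl

theorem map_vec3_add_smul (a b c e : V) (s t u : R) :
    ψ ![a + s • e, b + t • e, c + u • e] =
      ψ ![a, b, c] + u • ψ ![a, b, e] - t • ψ ![a, c, e] + s • ψ ![b, c, e] := by
  simp only [map_vec3_add_left, map_vec3_add_mid, map_vec3_add_right, map_vec3_smul_left,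
    map_vec3_smul_mid, map_vec3_smul_right, map_vec3_self_left, map_vec3_self_right,
    map_vec3_self_outer, smul_zero, add_zero]
  rw [map_vec3_swap_right ψ a c e, map_vec3_swap_left ψ b e c, map_vec3_swap_right ψ b c e]
  module

theorem ext_vec3_of_forall_eq_add_smul {p : Submodule R V} {e : V}
    (hspan : ∀ x : V, ∃ y ∈ p, ∃ t : R, x = y + t • e) {ψ ψ' : V [⋀^Fin 3]→ₗ[R] N}
    (hp : ∀ a b c : p, ψ ![a, b, c] = ψ' ![a, b, c])
    (he : ∀ a b : p, ψ ![a, b, e] = ψ' ![a, b, e]) : ψ = ψ' := by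
  ext v
  obtain ⟨a, ha, s, hv₀⟩ := hspan (v 0)
  obtain ⟨b, hb, t, hv₁⟩ := hspan (v 1)
  obtain ⟨c, hc, u, hv₂⟩ := hspan (v 2)
  have hv : v = ![a + s • e, b + t • e, c + u • e] := by
    ext i; fin_cases i <;> assumption
  rw [hv, map_vec3_add_smul, map_vec3_add_smul, hp ⟨a, ha⟩ ⟨b, hb⟩ ⟨c, hc⟩, he ⟨a, ha⟩ ⟨b, hb⟩,
    he ⟨a, ha⟩ ⟨c, hc⟩, he ⟨b, hb⟩ ⟨c, hc⟩]

end AlternatingMap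

namespace LieAlgebra

variable {R L M : Type*} [CommRing R] [LieRing L] [LieAlgebra R L] [AddCommGroup M] [Module R M]

/-- The Chevalley–Eilenberg differential with trivial coefficients (`LieModule.Cohomology.d₂₃` for
the trivial module). The formula equals `−(χ([X,Y],Z) + χ([Y,Z],X) + χ([Z,X],Y))`, so it is
alternating even when `χ` is not. -/
def twoFormDiff (χ : L →ₗ[R] L →ₗ[R] M) : L [⋀^Fin 3]→ₗ[R] M where
  toFun v := -χ ⁅v 0, v 1⁆ (v 2) + χ ⁅v 0, v 2⁆ (v 1) - χ ⁅v 1, v 2⁆ (v 0)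
  map_update_add' := by
    intro inst v i x y
    -- the field quantifies over all `DecidableEq (Fin 3)` instances
    obtain rfl := Subsingleton.elim inst (instDecidableEqFin 3)
    fin_cases i <;> simp <;> abel
  map_update_smul' := by
    intro inst v i c x
    obtain rfl := Subsingleton.elim inst (instDecidableEqFin 3)
    fin_cases i <;> simp <;> module
  map_eq_zero_of_eq' v i j hv hij := by
    fin_cases i <;> fin_cases j <;> simp only [ne_eq, not_true_eq_false] at hij <;>
      simp only [Fin.zero_eta, Fin.mk_one, Fin.isValue, Fin.reduceFinMk] at hv <;>
      rw [hv] <;> simp <;>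
      rw [← lie_skew (v 1), map_neg, LinearMap.neg_apply, sub_neg_eq_add, neg_add_cancel]

@[simp]
theorem twoFormDiff_vec3 (χ : L →ₗ[R] L →ₗ[R] M) (X Y Z : L) :
    twoFormDiff χ ![X, Y, Z] = -χ ⁅X, Y⁆ Z + χ ⁅X, Z⁆ Y - χ ⁅Y, Z⁆ X :=
  rfl

theorem twoFormDiff_vec3_eq_of_isAlt {χ : L →ₗ[R] L →ₗ[R] M} (hχ : χ.IsAlt) (X Y Z : L) :
    twoFormDiff χ ![X, Y, Z] = -χ ⁅Z, X⁆ Y - χ X ⁅Z, Y⁆ - χ ⁅X, Y⁆ Z := by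
  rw [twoFormDiff_vec3, ← lie_skew Z X, ← lie_skew Z Y, map_neg, map_neg, ← hχ.neg ⁅Y, Z⁆ X]
  simp only [LinearMap.neg_apply]
  abel

end LieAlgebra

namespace LinearMap

variable {K V : Type*} [Field K] [AddCommGroup V] [Module K V]

theorem exists_isAlt_extend_of_notMem {p : Submodule K V} {e : V} (he : e ∉ p)
    (ν : p →ₗ[K] p →ₗ[K] K) (hν : ν.IsAlt) (α : p →ₗ[K] K) :
    ∃ χ : V →ₗ[K] V →ₗ[K] K, χ.IsAlt ∧ (∀ x y : p, χ x y = ν x y) ∧ ∀ x : p, χ x e = -α x := by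
  obtain ⟨π, hπp, hπe⟩ := exists_extend_of_notMem LinearMap.id he 0
  obtain ⟨τ, hτp, hτe⟩ := exists_extend_of_notMem (0 : p →ₗ[K] K) he 1
  have hπ (x : p) : π x = x := congr($hπp x)
  have hτ (x : p) : τ x = 0 := congr($hτp x)
  refine ⟨ν.compl₁₂ π π + τ.smulRight (α ∘ₗ π) - (α ∘ₗ π).smulRight τ, fun x => ?_,
    fun x y => ?_, fun x => ?_⟩
  · simp [hν.self_eq_zero, mul_comm]
  · simp [hπ, hτ]
  · simp [hπ, hτ, hπe, hτe]

end LinearMap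

theorem exact_g2_iff_exact_rho_and_torsion_equation_general
    (g : Type*) [LieRing g] [LieAlgebra ℝ g]
    (h : LieIdeal ℝ g) (e7 : g) (φ : g [⋀^Fin 3]→ₗ[ℝ] ℝ)
    (hspan : ∀ x : g, ∃ y ∈ h, ∃ t : ℝ, x = y + t • e7)
    (he7 : e7 ∉ h) :
    (∃ χ : g →ₗ[ℝ] g →ₗ[ℝ] ℝ, (∀ X : g, χ X X = 0) ∧
        ∀ X Y Z : g, φ ![X, Y, Z] = -χ ⁅X, Y⁆ Z + χ ⁅X, Z⁆ Y - χ ⁅Y, Z⁆ X) ↔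
      (∃ ν : ↥h →ₗ[ℝ] ↥h →ₗ[ℝ] ℝ, (∀ X : ↥h, ν X X = 0) ∧
        ∃ α : ↥h →ₗ[ℝ] ℝ,
          (∀ X Y Z : ↥h, φ ![(X : g), (Y : g), (Z : g)] =
            -ν ⟨⁅(X : g), (Y : g)⁆, h.lie_mem Y.2⟩ Z +
              ν ⟨⁅(X : g), (Z : g)⁆, h.lie_mem Z.2⟩ Y -
              ν ⟨⁅(Y : g), (Z : g)⁆, h.lie_mem Z.2⟩ X) ∧
          (∀ X Y : ↥h,
            (-(ν ⟨⁅e7, (X : g)⁆, h.lie_mem X.2⟩ Y) - ν X ⟨⁅e7, (Y : g)⁆, h.lie_mem Y.2⟩) +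
              α ⟨⁅(X : g), (Y : g)⁆, h.lie_mem Y.2⟩ =
            φ ![(X : g), (Y : g), e7])) := by
  constructor
  · rintro ⟨χ, hχ, hdχ⟩
    refine ⟨χ.compl₁₂ h.toSubmodule.subtype h.toSubmodule.subtype, fun X => hχ X,
      -(χ.flip e7 ∘ₗ h.toSubmodule.subtype), fun X Y Z => hdχ X Y Z, fun X Y => ?_⟩
    rw [hdχ, ← LieAlgebra.twoFormDiff_vec3, LieAlgebra.twoFormDiff_vec3_eq_of_isAlt hχ,
      sub_eq_add_neg _ (χ _ e7)]
    rfl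
  · rintro ⟨ν, hν, α, hρ, hω⟩
    obtain ⟨χ, hχ, hχν, hχα⟩ := LinearMap.exists_isAlt_extend_of_notMem he7 ν hν α
    suffices hφ : φ = LieAlgebra.twoFormDiff χ from ⟨χ, hχ, fun X Y Z => by rw [hφ]; rfl⟩
    refine AlternatingMap.ext_vec3_of_forall_eq_add_smul hspan (fun a b c => ?_) (fun a b => ?_)
    · rw [LieAlgebra.twoFormDiff_vec3, hρ a b c, hχν ⟨_, h.lie_mem b.2⟩ c,
        hχν ⟨_, h.lie_mem c.2⟩ b, hχν ⟨_, h.lie_mem c.2⟩ a]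
    · rw [LieAlgebra.twoFormDiff_vec3_eq_of_isAlt hχ, ← hω a b, hχν ⟨_, h.lie_mem a.2⟩ b,
        hχν a ⟨_, h.lie_mem b.2⟩, hχα ⟨_, h.lie_mem b.2⟩, sub_neg_eq_add]

theorem exact_g2_iff_exact_rho_and_torsion_equation
    (g : Type*) [LieRing g] [LieAlgebra ℝ g]
    (h : LieIdeal ℝ g) (e7 : g) (φ : g [⋀^Fin 3]→ₗ[ℝ] ℝ)
    (hspan : ∀ x : g, ∃ y ∈ h, ∃ t : ℝ, x = y + t • e7)
    (he7 : e7 ∉ h)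
    (hunimodular : ∀ X : g, X ∈ h → LinearMap.trace ℝ ↥h.toSubmodule (adRestrict h X) = 0)
    (hadapted : ∃ u : g ≃ₗ[ℝ] (Fin 7 → ℝ),
      φ = phi0.compLinearMap u.toLinearMap ∧
      (∀ x ∈ h, dotProduct (u x) (u e7) = 0) ∧
      dotProduct (u e7) (u e7) = 1) :
    (∃ χ : g →ₗ[ℝ] g →ₗ[ℝ] ℝ, (∀ X : g, χ X X = 0) ∧
        ∀ X Y Z : g, φ ![X, Y, Z] = -χ ⁅X, Y⁆ Z + χ ⁅X, Z⁆ Y - χ ⁅Y, Z⁆ X) ↔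
      (∃ ν : ↥h →ₗ[ℝ] ↥h →ₗ[ℝ] ℝ, (∀ X : ↥h, ν X X = 0) ∧
        ∃ α : ↥h →ₗ[ℝ] ℝ,
          (∀ X Y Z : ↥h, φ ![(X : g), (Y : g), (Z : g)] =
            -ν ⟨⁅(X : g), (Y : g)⁆, h.lie_mem Y.2⟩ Z +
              ν ⟨⁅(X : g), (Z : g)⁆, h.lie_mem Z.2⟩ Y -
              ν ⟨⁅(Y : g), (Z : g)⁆, h.lie_mem Z.2⟩ X) ∧
          (∀ X Y : ↥h,
            (-(ν ⟨⁅e7, (X : g)⁆, h.lie_mem X.2⟩ Y) - ν X ⟨⁅e7, (Y : g)⁆, h.lie_mem Y.2⟩) +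
              α ⟨⁅(X : g), (Y : g)⁆, h.lie_mem Y.2⟩ =
            φ ![(X : g), (Y : g), e7])) :=
  exact_g2_iff_exact_rho_and_torsion_equation_general g h e7 φ hspan he7
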